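/- Let Γ be a countable discrete group, L : Γ → ℕ a function, and C_n := {γ ∈ Γ : L(γ) = n}. Assume the Jolissaint hypothesis: there exists c > 0 such that for all k, l, m ∈ ℕ and all finitely supported f, g : Γ → ℂ with supp f ⊆ C_k and supp g ⊆ C_l, one has ‖(f*g)·χ_{C_m}‖₂ ≤ c‖f‖₂‖g‖₂ whenever |k−l| ≤ m ≤ k+l, and (f*g)·χ_{C_m} = 0 whenever m < |k−l| or m > k+l. Then there exists C > 0 such that for every k ≥ 1, every finitely supported f : Γ → ℂ with supp f ⊆ C_k, and every g ∈ ℓ²(Γ), the convolution f*g lies in ℓ²(Γ) and ‖f*g‖₂ ≤ C · k · ‖f‖₂ · ‖g‖₂. -/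

import Mathlib

open scoped ENNReal

/-- The ℓ² norm of a function on a discrete group. -/
noncomputable def l2norm {Γ : Type*} (h : Γ → ℂ) : ℝ :=
  (∑' γ, ‖h γ‖ ^ 2) ^ (1/2 : ℝ)

/-- Convolution of functions on a group: `(f*g)(γ) = ∑ₛ f(s) g(s⁻¹γ)`. -/
noncomputable def conv {Γ : Type*} [Group Γ] (f g : Γ → ℂ) : Γ → ℂ :=
  fun γ => ∑' s, f s * g (s⁻¹ * γ)

/-- Pointwise product of `h` with the characteristic function of `A`. -/
noncomputable def restrict {Γ : Type*} (h : Γ → ℂ) (A : Set Γ) : Γ → ℂ :=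
  fun γ => A.indicator h γ


/-! Decompose `g = ∑ₗ g·χ_{C_l}` and `f*g = ∑ₘ (f*g)·χ_{C_m}`. By the Jolissaint hypothesis the
`m`-th piece of `f * (g·χ_{C_l})` vanishes unless `|l - m| ≤ k` and is bounded by
`c ‖f‖ ‖g·χ_{C_l}‖` otherwise. Each level `m` thus sees at most `2k + 1` levels `l` and vice versa,
so Cauchy–Schwarz and double counting give `‖f*g‖ ≤ c (2k + 1) ‖f‖ ‖g‖` for finitely supported
`g`. A general `g ∈ ℓ²` is handled on each finite window `F`, where `f * g` agrees with
`f * (g·χ_{(supp f)⁻¹ F})`. -/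

open Function
open scoped Pointwise

section L2

variable {α : Type*}

lemma l2norm_eq_sqrt (h : α → ℂ) : l2norm h = √(∑' a, ‖h a‖ ^ 2) := by
  rw [l2norm, Real.sqrt_eq_rpow]

lemma l2norm_nonneg (h : α → ℂ) : 0 ≤ l2norm h := by
  rw [l2norm_eq_sqrt]
  exact Real.sqrt_nonneg _

lemma sq_l2norm (h : α → ℂ) : l2norm h ^ 2 = ∑' a, ‖h a‖ ^ 2 := by
  rw [l2norm_eq_sqrt, Real.sq_sqrt (tsum_nonneg fun _ => by positivity)]

lemma l2norm_zero : l2norm (0 : α → ℂ) = 0 := by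
  simp [l2norm_eq_sqrt]

lemma sq_l2norm_of_support_subset {h : α → ℂ} {s : Finset α} (hs : support h ⊆ s) :
    l2norm h ^ 2 = ∑ a ∈ s, ‖h a‖ ^ 2 := by
  rw [sq_l2norm, tsum_eq_sum]
  intro a ha
  simp [notMem_support.1 fun h' => ha (hs h')]

lemma memℓp_two_iff {h : α → ℂ} : Memℓp h 2 ↔ Summable fun a => ‖h a‖ ^ 2 := by
  rw [memℓp_gen_iff (by norm_num)]
  norm_num

lemma memℓp_two_of_finite_support {h : α → ℂ} (hh : (support h).Finite) : Memℓp h 2 :=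
  (memℓp_zero hh).of_exponent_ge (by norm_num)

lemma l2norm_coe_lp (F : lp (fun _ : α => ℂ) 2) : l2norm ⇑F = ‖F‖ := by
  rw [lp.norm_eq_tsum_rpow (by norm_num), l2norm]
  norm_num

lemma l2norm_sum_le {ι : Type*} (s : Finset ι) {h : ι → α → ℂ} (hh : ∀ i, Memℓp (h i) 2) :
    l2norm (∑ i ∈ s, h i) ≤ ∑ i ∈ s, l2norm (h i) := by
  let F : ι → lp (fun _ : α => ℂ) 2 := fun i => ⟨h i, hh i⟩
  calc l2norm (∑ i ∈ s, h i) = ‖∑ i ∈ s, F i‖ := by rw [← l2norm_coe_lp, lp.coeFn_sum]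
    _ ≤ ∑ i ∈ s, ‖F i‖ := norm_sum_le _ _
    _ = ∑ i ∈ s, l2norm (h i) := by simp_rw [← l2norm_coe_lp]; rfl

lemma sum_sq_le_sq_l2norm {h : α → ℂ} (hh : Summable fun a => ‖h a‖ ^ 2) (s : Finset α) :
    ∑ a ∈ s, ‖h a‖ ^ 2 ≤ l2norm h ^ 2 := by
  rw [sq_l2norm]
  exact hh.sum_le_tsum s fun _ _ => by positivity

lemma support_restrict_subset (h : α → ℂ) (A : Set α) :
    support (restrict h A) ⊆ support h :=
  Set.support_indicator.trans_subset Set.inter_subset_right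

lemma l2norm_restrict_le {h : α → ℂ} (hh : Summable fun a => ‖h a‖ ^ 2) (A : Set α) :
    l2norm (restrict h A) ≤ l2norm h := by
  have hle : ∀ a, ‖restrict h A a‖ ^ 2 ≤ ‖h a‖ ^ 2 := fun a => by
    unfold restrict
    by_cases ha : a ∈ A <;> simp [ha]
  rw [l2norm_eq_sqrt, l2norm_eq_sqrt]
  exact Real.sqrt_le_sqrt <|
    (hh.of_nonneg_of_le (fun _ => by positivity) hle).tsum_le_tsum hle hh

lemma restrict_sum {ι : Type*} (s : Finset ι) (h : ι → α → ℂ) (A : Set α) :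
    restrict (∑ i ∈ s, h i) A = ∑ i ∈ s, restrict (h i) A := by
  funext a
  rw [Finset.sum_apply]
  exact congrFun (Finset.indicator_sum s A h) a |>.trans (Finset.sum_apply a s _)

variable {β : Type*} [DecidableEq β]

lemma sum_restrict_fiber {h : α → ℂ} {s : Finset α} (hs : support h ⊆ s) (L : α → β) :
    ∑ b ∈ s.image L, restrict h {a | L a = b} = h := by
  funext a
  rw [Finset.sum_apply]
  by_cases ha : a ∈ s
  · rw [Finset.sum_eq_single_of_mem (L a) (Finset.mem_image_of_mem L ha)]
    · simp [restrict]
    · intro b _ hb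
      simp [restrict, Ne.symm hb]
  · have h0 : h a = 0 := notMem_support.1 fun h' => ha (hs h')
    simp [restrict, Set.indicator_apply, h0]

lemma sq_l2norm_eq_sum_sq_l2norm_restrict_fiber {h : α → ℂ} {s : Finset α} (hs : support h ⊆ s)
    (L : α → β) :
    l2norm h ^ 2 = ∑ b ∈ s.image L, l2norm (restrict h {a | L a = b}) ^ 2 := by
  simp_rw [sq_l2norm_of_support_subset hs,
    sq_l2norm_of_support_subset ((support_restrict_subset h _).trans hs)]
  rw [Finset.sum_comm]
  refine Finset.sum_congr rfl fun a ha => ?_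
  rw [Finset.sum_eq_single_of_mem (L a) (Finset.mem_image_of_mem L ha)]
  · simp [restrict]
  · intro b _ hb
    simp [restrict, Ne.symm hb]

end L2

lemma sum_sq_sum_filter_le {ι κ : Type*} (s : Finset ι) (t : Finset κ) (R : ι → κ → Prop)
    [∀ i j, Decidable (R i j)] (a : ι → ℝ) {N : ℕ}
    (hrow : ∀ j ∈ t, (s.filter (R · j)).card ≤ N) (hcol : ∀ i ∈ s, (t.filter (R i)).card ≤ N) :
    ∑ j ∈ t, (∑ i ∈ s with R i j, a i) ^ 2 ≤ N ^ 2 * ∑ i ∈ s, a i ^ 2 := by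
  calc ∑ j ∈ t, (∑ i ∈ s with R i j, a i) ^ 2
      ≤ ∑ j ∈ t, N * ∑ i ∈ s with R i j, a i ^ 2 := by
        refine Finset.sum_le_sum fun j hj => sq_sum_le_card_mul_sum_sq.trans ?_
        exact mul_le_mul_of_nonneg_right (by exact_mod_cast hrow j hj)
          (Finset.sum_nonneg fun _ _ => sq_nonneg _)
    _ = N * ∑ i ∈ s, (t.filter (R i)).card * a i ^ 2 := by
        simp_rw [← Finset.mul_sum, Finset.sum_filter]
        rw [Finset.sum_comm]
        simp_rw [← Finset.sum_filter, Finset.sum_const, nsmul_eq_mul]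
    _ ≤ N * ∑ i ∈ s, N * a i ^ 2 := by
        gcongr with i hi
        exact_mod_cast hcol i hi
    _ = N ^ 2 * ∑ i ∈ s, a i ^ 2 := by
        rw [← Finset.mul_sum]
        ring

lemma card_filter_natAbs_sub_le (s : Finset ℕ) (m k : ℕ) :
    (s.filter fun l : ℕ => ((l : ℤ) - m).natAbs ≤ k).card ≤ 2 * k + 1 :=
  calc _ ≤ (Finset.Icc (m - k) (m + k)).card :=
        Finset.card_le_card fun l hl => by
          simp only [Finset.mem_filter, Finset.mem_Icc] at hl ⊢
          omega
    _ ≤ 2 * k + 1 := by simp only [Nat.card_Icc]; omega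

section Convolution

variable {Γ : Type*} [Group Γ]

lemma conv_eq_sum {f : Γ → ℂ} {s : Finset Γ} (hf : support f ⊆ s) (g : Γ → ℂ) (γ : Γ) :
    conv f g γ = ∑ t ∈ s, f t * g (t⁻¹ * γ) := by
  refine tsum_eq_sum fun t ht => ?_
  simp [notMem_support.1 fun h' => ht (hf h')]

lemma conv_sum {ι : Type*} {f : Γ → ℂ} (hf : (support f).Finite) (s : Finset ι)
    (g : ι → Γ → ℂ) : conv f (∑ i ∈ s, g i) = ∑ i ∈ s, conv f (g i) := by
  funext γ
  simp only [conv_eq_sum hf.coe_toFinset.superset, Finset.sum_apply, Finset.mul_sum]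
  exact Finset.sum_comm

lemma support_conv_subset [DecidableEq Γ] {f g : Γ → ℂ} {s t : Finset Γ} (hf : support f ⊆ s)
    (hg : support g ⊆ t) : support (conv f g) ⊆ ↑(s * t) := by
  intro γ hγ
  rw [mem_support, conv_eq_sum hf] at hγ
  obtain ⟨u, hu, hne⟩ := Finset.exists_ne_zero_of_sum_ne_zero hγ
  exact Finset.mem_mul.2 ⟨u, hu, _, hg (right_ne_zero_of_mul hne), mul_inv_cancel_left u γ⟩

lemma finite_support_conv {f g : Γ → ℂ} (hf : (support f).Finite) (hg : (support g).Finite) :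
    (support (conv f g)).Finite := by
  classical
  exact (Finset.finite_toSet _).subset
    (support_conv_subset hf.coe_toFinset.superset hg.coe_toFinset.superset)

lemma conv_eq_conv_restrict [DecidableEq Γ] {f : Γ → ℂ} {s : Finset Γ} (hf : support f ⊆ s)
    (g : Γ → ℂ) {F : Finset Γ} {γ : Γ} (hγ : γ ∈ F) :
    conv f g γ = conv f (restrict g ↑(s⁻¹ * F)) γ := by
  rw [conv_eq_sum hf, conv_eq_sum hf]
  refine Finset.sum_congr rfl fun t ht => ?_
  rw [restrict, Set.indicator_of_mem]
  exact Finset.mem_coe.2 (Finset.mul_mem_mul (Finset.inv_mem_inv ht) hγ)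

end Convolution

section Jolissaint

variable {Γ : Type*} [Group Γ]

def JolissaintCondition (C : ℕ → Set Γ) (c : ℝ) : Prop :=
  ∀ (k l m : ℕ) (f g : Γ → ℂ),
    (support f).Finite → support f ⊆ C k → (support g).Finite → support g ⊆ C l →
    ((((k : ℤ) - l).natAbs ≤ m ∧ m ≤ k + l →
        l2norm (restrict (conv f g) (C m)) ≤ c * l2norm f * l2norm g) ∧
      (m < ((k : ℤ) - l).natAbs ∨ k + l < m → restrict (conv f g) (C m) = 0))

lemma l2norm_restrict_conv_le_ite {C : ℕ → Set Γ} {c : ℝ} (hJ : JolissaintCondition C c)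
    (hc : 0 ≤ c) {k l : ℕ} {f g : Γ → ℂ} (hf : (support f).Finite) (hfk : support f ⊆ C k)
    (hg : (support g).Finite) (hgl : support g ⊆ C l) (m : ℕ) :
    l2norm (restrict (conv f g) (C m)) ≤
      if ((l : ℤ) - m).natAbs ≤ k then c * l2norm f * l2norm g else 0 := by
  have hJ' := hJ k l m f g hf hfk hg hgl
  by_cases hw : ((k : ℤ) - l).natAbs ≤ m ∧ m ≤ k + l
  · rw [if_pos (by omega)]
    exact hJ'.1 hw
  · rw [hJ'.2 (by omega), l2norm_zero]
    split_ifs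
    · exact mul_nonneg (mul_nonneg hc (l2norm_nonneg f)) (l2norm_nonneg g)
    · exact le_rfl

theorem l2norm_conv_le_of_finite_support {L : Γ → ℕ} {c : ℝ}
    (hJ : JolissaintCondition (fun n => {γ | L γ = n}) c) (hc : 0 ≤ c) {k : ℕ} {f g : Γ → ℂ}
    (hf : (support f).Finite) (hfk : support f ⊆ {γ | L γ = k}) (hg : (support g).Finite) :
    l2norm (conv f g) ≤ c * (2 * k + 1) * l2norm f * l2norm g := by
  classical
  set sg := hg.toFinset
  set Λ := sg.image L
  set gl : ℕ → Γ → ℂ := fun l => restrict g {γ | L γ = l}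
  set near : ℕ → ℕ → Prop := fun l m => ((l : ℤ) - m).natAbs ≤ k
  have hgl : ∀ l, (support (gl l)).Finite := fun l => hg.subset (support_restrict_subset _ _)
  have hlevel : ∀ m, l2norm (restrict (conv f g) {γ | L γ = m}) ≤
      c * l2norm f * ∑ l ∈ Λ with near l m, l2norm (gl l) := fun m =>
    calc l2norm (restrict (conv f g) {γ | L γ = m})
        = l2norm (∑ l ∈ Λ, restrict (conv f (gl l)) {γ | L γ = m}) := by
          rw [← restrict_sum, ← conv_sum hf, sum_restrict_fiber hg.coe_toFinset.superset]
      _ ≤ ∑ l ∈ Λ, l2norm (restrict (conv f (gl l)) {γ | L γ = m}) :=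
          l2norm_sum_le _ fun l => memℓp_two_of_finite_support <|
            (finite_support_conv hf (hgl l)).subset (support_restrict_subset _ _)
      _ ≤ ∑ l ∈ Λ, if near l m then c * l2norm f * l2norm (gl l) else 0 :=
          Finset.sum_le_sum fun l _ =>
            l2norm_restrict_conv_le_ite hJ hc hf hfk (hgl l) Set.support_indicator_subset m
      _ = c * l2norm f * ∑ l ∈ Λ with near l m, l2norm (gl l) := by
          rw [← Finset.sum_filter, Finset.mul_sum]
  have hsupp := support_conv_subset hf.coe_toFinset.superset hg.coe_toFinset.superset
  have hsq : l2norm (conv f g) ^ 2 ≤ (c * (2 * k + 1) * l2norm f * l2norm g) ^ 2 :=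
    calc l2norm (conv f g) ^ 2
        = ∑ m ∈ (hf.toFinset * sg).image L, l2norm (restrict (conv f g) {γ | L γ = m}) ^ 2 :=
          sq_l2norm_eq_sum_sq_l2norm_restrict_fiber hsupp L
      _ ≤ ∑ m ∈ (hf.toFinset * sg).image L,
            (c * l2norm f * ∑ l ∈ Λ with near l m, l2norm (gl l)) ^ 2 :=
          Finset.sum_le_sum fun m _ => pow_le_pow_left₀ (l2norm_nonneg _) (hlevel m) 2
      _ = (c * l2norm f) ^ 2 *
            ∑ m ∈ (hf.toFinset * sg).image L, (∑ l ∈ Λ with near l m, l2norm (gl l)) ^ 2 := by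
          simp_rw [mul_pow, Finset.mul_sum]
      _ ≤ (c * l2norm f) ^ 2 * ((2 * k + 1 : ℕ) ^ 2 * ∑ l ∈ Λ, l2norm (gl l) ^ 2) := by
          gcongr
          refine sum_sq_sum_filter_le _ _ near _ (fun m _ => card_filter_natAbs_sub_le Λ m k)
            fun l _ => ?_
          convert card_filter_natAbs_sub_le ((hf.toFinset * sg).image L) l k using 3
          rw [← Int.natAbs_neg, neg_sub]
      _ = (c * (2 * k + 1) * l2norm f * l2norm g) ^ 2 := by
          rw [← sq_l2norm_eq_sum_sq_l2norm_restrict_fiber hg.coe_toFinset.superset L]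
          push_cast
          ring
  exact (pow_le_pow_iff_left₀ (l2norm_nonneg _)
    (mul_nonneg (mul_nonneg (by positivity) (l2norm_nonneg f)) (l2norm_nonneg g)) two_ne_zero).1 hsq

end Jolissaint

theorem summable_sq_conv_and_l2norm_conv_le {Γ : Type*} [Group Γ] {f : Γ → ℂ}
    (hf : (support f).Finite) {B : ℝ} (hB : 0 ≤ B)
    (hbound : ∀ g : Γ → ℂ, (support g).Finite → l2norm (conv f g) ≤ B * l2norm g)
    {g : Γ → ℂ} (hg : Summable fun γ => ‖g γ‖ ^ 2) :
    Summable (fun γ => ‖conv f g γ‖ ^ 2) ∧ l2norm (conv f g) ≤ B * l2norm g := by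
  classical
  have hpartial : ∀ F : Finset Γ, ∑ γ ∈ F, ‖conv f g γ‖ ^ 2 ≤ (B * l2norm g) ^ 2 := by
    intro F
    set g' := restrict g ↑(hf.toFinset⁻¹ * F)
    have hg' : (support g').Finite := (Finset.finite_toSet _).subset Set.support_indicator_subset
    calc ∑ γ ∈ F, ‖conv f g γ‖ ^ 2 = ∑ γ ∈ F, ‖conv f g' γ‖ ^ 2 :=
          Finset.sum_congr rfl fun γ hγ => by
            rw [conv_eq_conv_restrict hf.coe_toFinset.superset g hγ]
      _ ≤ l2norm (conv f g') ^ 2 :=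
          sum_sq_le_sq_l2norm (memℓp_two_iff.1 <|
            memℓp_two_of_finite_support (finite_support_conv hf hg')) F
      _ ≤ (B * l2norm g') ^ 2 := pow_le_pow_left₀ (l2norm_nonneg _) (hbound g' hg') 2
      _ ≤ (B * l2norm g) ^ 2 := by
          gcongr
          · exact mul_nonneg hB (l2norm_nonneg _)
          · exact l2norm_restrict_le hg _
  have hsum := summable_of_sum_le (fun _ => by positivity) hpartial
  refine ⟨hsum, ?_⟩
  rw [l2norm_eq_sqrt, Real.sqrt_le_iff]
  exact ⟨mul_nonneg hB (l2norm_nonneg g), hsum.tsum_le_of_sum_le hpartial⟩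

theorem stmt1_general {Γ : Type*} [Group Γ] (L : Γ → ℕ)
    (C : ℕ → Set Γ) (hC : ∀ n, C n = {γ : Γ | L γ = n})
    (hJol : ∃ c > (0 : ℝ), ∀ (k l m : ℕ) (f g : Γ → ℂ),
      (Function.support f).Finite → Function.support f ⊆ C k →
      (Function.support g).Finite → Function.support g ⊆ C l →
      ((((k : ℤ) - l).natAbs ≤ m ∧ m ≤ k + l →
          l2norm (restrict (conv f g) (C m)) ≤ c * l2norm f * l2norm g) ∧
        (m < ((k : ℤ) - l).natAbs ∨ k + l < m →
          restrict (conv f g) (C m) = 0))) :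
    ∃ C' > (0 : ℝ), ∀ (k : ℕ), 1 ≤ k → ∀ (f g : Γ → ℂ),
      (Function.support f).Finite → Function.support f ⊆ C k →
      Summable (fun γ => ‖g γ‖ ^ 2) →
      Summable (fun γ => ‖conv f g γ‖ ^ 2) ∧
        l2norm (conv f g) ≤ C' * (k : ℝ) * l2norm f * l2norm g := by
  obtain rfl : C = fun n => {γ | L γ = n} := funext hC
  obtain ⟨c, hc, hJ⟩ := hJol
  refine ⟨3 * c, by positivity, fun k hk f g hf hfk hg => ?_⟩
  have hk' : (1 : ℝ) ≤ k := by exact_mod_cast hk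
  refine summable_sq_conv_and_l2norm_conv_le hf (mul_nonneg (by positivity) (l2norm_nonneg f))
    (fun g' hg' => ?_) hg
  calc l2norm (conv f g') ≤ c * (2 * k + 1) * l2norm f * l2norm g' :=
        l2norm_conv_le_of_finite_support hJ hc.le hf hfk hg'
    _ ≤ 3 * c * k * l2norm f * l2norm g' := by
        have : c * (2 * k + 1) ≤ 3 * c * k := by nlinarith
        gcongr
        · exact l2norm_nonneg _
        · exact l2norm_nonneg _

theorem stmt1 {Γ : Type*} [Group Γ] [Countable Γ] (L : Γ → ℕ)
    (C : ℕ → Set Γ) (hC : ∀ n, C n = {γ : Γ | L γ = n})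
    (hJol : ∃ c > (0 : ℝ), ∀ (k l m : ℕ) (f g : Γ → ℂ),
      (Function.support f).Finite → Function.support f ⊆ C k →
      (Function.support g).Finite → Function.support g ⊆ C l →
      ((((k : ℤ) - l).natAbs ≤ m ∧ m ≤ k + l →
          l2norm (restrict (conv f g) (C m)) ≤ c * l2norm f * l2norm g) ∧
        (m < ((k : ℤ) - l).natAbs ∨ k + l < m →
          restrict (conv f g) (C m) = 0))) :
    ∃ C' > (0 : ℝ), ∀ (k : ℕ), 1 ≤ k → ∀ (f g : Γ → ℂ),
      (Function.support f).Finite → Function.support f ⊆ C k →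
      Summable (fun γ => ‖g γ‖ ^ 2) →
      Summable (fun γ => ‖conv f g γ‖ ^ 2) ∧
        l2norm (conv f g) ≤ C' * (k : ℝ) * l2norm f * l2norm g :=
  stmt1_general L C hC hJol
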